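/- An FDFA F = (Q, P) accepts some pair (i.e., L(F) ≠ ∅) if and only if there exist words x ∈ Σ* and y ∈ Σ⁺ such that Q(x) = Q(x·y) and the progress DFA P_{Q(x)} accepts y. -/

import Mathlib

open Classical

/-- `wpow v n` is the word `v` repeated `n` times. -/
def wpow {α : Type} (v : List α) : ℕ → List α
  | 0 => []
  | n + 1 => wpow v n ++ v

/-- The ultimately periodic infinite word `u·v^ω` (meaningful when `v ≠ []`). -/
def upWord {α : Type} [Inhabited α] (u v : List α) : ℕ → α := fun n =>
  if n < u.length then u.getD n default
  else v.getD ((n - u.length) % v.length) default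

/-- `l` is a prefix of the infinite word `w`. -/
def prefOf {α : Type} [Inhabited α] (l : List α) (w : ℕ → α) : Prop :=
  ∀ i < l.length, w i = l.getD i default

/-- A complete deterministic automaton (no acceptance condition). -/
structure DetAuto (α : Type) : Type 1 where
  State : Type
  [fin : Fintype State]
  init : State
  step : State → α → State

attribute [instance] DetAuto.fin

namespace DetAuto

variable {α : Type}

/-- The state reached from `q` after reading the finite word `w`. -/
def run (A : DetAuto α) (q : A.State) (w : List α) : A.State := w.foldl A.step q

/-- The state reached from the initial state after reading `w`. -/
def eval (A : DetAuto α) (w : List α) : A.State := A.run A.init w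

/-- The (infinite) run of `A` on an infinite word `w`. -/
def runSeq (A : DetAuto α) (w : ℕ → α) : ℕ → A.State
  | 0 => A.init
  | n + 1 => A.step (A.runSeq w n) (w n)

lemma exists_rep (A : DetAuto α) (u v : List α) :
    ∃ i, ∃ j, 1 ≤ j ∧ A.eval (u ++ wpow v i) = A.eval (u ++ wpow v (i + j)) := by
  obtain ⟨a, b, hab, hfab⟩ :=
    Finite.exists_ne_map_eq_of_infinite (fun n : ℕ => A.eval (u ++ wpow v n))
  rcases Ne.lt_or_gt hab with h | h
  · exact ⟨a, b - a, by omega, by rw [Nat.add_sub_cancel' h.le]; exact hfab⟩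
  · exact ⟨b, a - b, by omega, by rw [Nat.add_sub_cancel' h.le]; exact hfab.symm⟩

/-- The least `i` in the normalization of `(u,v)` w.r.t. `A`. -/
noncomputable def normI (A : DetAuto α) (u v : List α) : ℕ :=
  Nat.find (A.exists_rep u v)

lemma normI_spec (A : DetAuto α) (u v : List α) :
    ∃ j, 1 ≤ j ∧ A.eval (u ++ wpow v (A.normI u v))
      = A.eval (u ++ wpow v (A.normI u v + j)) :=
  Nat.find_spec (A.exists_rep u v)

/-- The least `j` in the normalization of `(u,v)` w.r.t. `A`. -/
noncomputable def normJ (A : DetAuto α) (u v : List α) : ℕ :=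
  Nat.find (A.normI_spec u v)

/-- The normalization `(x, y) = (u·v^i, v^j)` of `(u,v)` w.r.t. `A`. -/
noncomputable def normalize (A : DetAuto α) (u v : List α) : List α × List α :=
  (u ++ wpow v (A.normI u v), wpow v (A.normJ u v))

/-- The product automaton. -/
def prod (A B : DetAuto α) : DetAuto α where
  State := A.State × B.State
  init := (A.init, B.init)
  step := fun p σ => (A.step p.1 σ, B.step p.2 σ)

end DetAuto

/-- A family of DFAs: a leading automaton and a progress DFA for each of its states. -/
structure FDFA (α : Type) : Type 1 where
  leading : DetAuto α
  pState : leading.State → Type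
  [pFin : ∀ q, Fintype (pState q)]
  pInit : ∀ q, pState q
  pStep : ∀ q, pState q → α → pState q
  pAcc : ∀ q, Set (pState q)

attribute [instance] FDFA.pFin

namespace FDFA

variable {α : Type}

/-- The progress DFA at state `q` accepts the finite word `y`. -/
def progAccept (F : FDFA α) (q : F.leading.State) (y : List α) : Prop :=
  y.foldl (F.pStep q) (F.pInit q) ∈ F.pAcc q

/-- `F` accepts the pair `(u, v)`: with `(x,y)` the normalization of `(u,v)` w.r.t.
the leading automaton, the progress DFA at the state reached on `x` accepts `y`. -/
noncomputable def Accept (F : FDFA α) (u v : List α) : Prop :=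
  F.progAccept (F.leading.eval (F.leading.normalize u v).1) (F.leading.normalize u v).2

/-- `F` is saturated: acceptance of `(u,v)` depends only on the infinite word `u·v^ω`. -/
def Saturated [Inhabited α] (F : FDFA α) : Prop :=
  ∀ u v u' v' : List α, v ≠ [] → v' ≠ [] → upWord u v = upWord u' v' →
    (F.Accept u v ↔ F.Accept u' v')

/-- The complement FDFA: same structure, complemented accepting states. -/
def compl (F : FDFA α) : FDFA α :=
  { F with pAcc := fun q => (F.pAcc q)ᶜ }

end FDFA

/-!
The normalization `(x, y) = (u·v^i, v^j)` of a pair with `v ≠ []` is itself a witness: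
`Q(x) = Q(x·y)` and `j ≥ 1`. Conversely, when `Q(x) = Q(x·y)` the pair `(x, y)` is its own
normalization, since `i = 0` and `j = 1` are already minimal.
-/

lemma wpow_one {α : Type} (v : List α) : wpow v 1 = v := by
  simp [wpow]

lemma wpow_add {α : Type} (v : List α) (m n : ℕ) :
    wpow v (m + n) = wpow v m ++ wpow v n := by
  induction n with
  | zero => simp [wpow]
  | succ n ih => simp [wpow, ih]

lemma wpow_ne_nil {α : Type} {v : List α} (hv : v ≠ []) {n : ℕ} (hn : 0 < n) :
    wpow v n ≠ [] := by
  obtain ⟨k, rfl⟩ := Nat.exists_eq_succ_of_ne_zero hn.ne'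
  simp [wpow, hv]

namespace DetAuto

variable {α : Type} (A : DetAuto α) (u v : List α)

lemma one_le_normJ : 1 ≤ A.normJ u v :=
  (Nat.find_spec (A.normI_spec u v)).1

lemma eval_normalize_fst_eq_eval_append :
    A.eval (A.normalize u v).1 = A.eval ((A.normalize u v).1 ++ (A.normalize u v).2) := by
  dsimp only [normalize]
  rw [List.append_assoc, ← wpow_add]
  exact (Nat.find_spec (A.normI_spec u v)).2

variable {A u v}

lemma normalize_eq_self_of_eval_eq (h : A.eval u = A.eval (u ++ v)) :
    A.normalize u v = (u, v) := by
  have hu : A.eval (u ++ wpow v 0) = A.eval (u ++ wpow v (0 + 1)) := by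
    simpa [wpow] using h
  have hI : A.normI u v = 0 := Nat.find_eq_zero _ |>.mpr ⟨1, le_rfl, hu⟩
  have hJ : A.normJ u v = 1 :=
    le_antisymm (Nat.find_le ⟨le_rfl, hI ▸ hu⟩) (A.one_le_normJ u v)
  simp [normalize, hI, hJ, wpow_one, wpow]

end DetAuto

namespace FDFA

variable {α : Type} {F : FDFA α} {u v : List α}

lemma accept_iff_of_eval_eq (h : F.leading.eval u = F.leading.eval (u ++ v)) :
    F.Accept u v ↔ F.progAccept (F.leading.eval u) v := by
  rw [Accept, DetAuto.normalize_eq_self_of_eval_eq h]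

end FDFA

/-- An FDFA `F` accepts some pair iff there are `x ∈ Σ*`, `y ∈ Σ⁺` with
`Q(x) = Q(x·y)` and the progress DFA at `Q(x)` accepts `y`. -/
theorem fdfa_nonempty_iff {α : Type} (F : FDFA α) :
    (∃ u v : List α, v ≠ [] ∧ F.Accept u v) ↔
    (∃ x y : List α, y ≠ [] ∧ F.leading.eval x = F.leading.eval (x ++ y) ∧
      F.progAccept (F.leading.eval x) y) := by
  constructor
  · rintro ⟨u, v, hv, hacc⟩
    exact ⟨_, _, wpow_ne_nil hv (F.leading.one_le_normJ u v),
      F.leading.eval_normalize_fst_eq_eval_append u v, hacc⟩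
  · rintro ⟨x, y, hy, heq, hacc⟩
    exact ⟨x, y, hy, (FDFA.accept_iff_of_eval_eq heq).mpr hacc⟩
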